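/- Let (f_i : U_i → X) be a family of G-equivariant open immersions of k-schemes which is jointly surjective (a Zariski cover of X). Then the induced morphisms Fix_G(f_i) : Fix_G(U_i) → Fix_G(X) are open immersions and are jointly surjective; that is, Fix_G(−) preserves Zariski covers. -/

import Mathlib

/-!
For a monomorphism `f : U ⟶ X`, equivariance shows that `Fix_G(U)` is exactly the preimage of `U`
under `Fix_G(X) ⟶ X`: the square formed by `Fix_G(f)`, `f` and the two projections to the base is
cartesian. Open immersions are stable under base change, and a point of `Fix_G(X)` lying over
`f u` lifts to the fibre product, i.e. to `Fix_G(U)`.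
-/

open CategoryTheory CategoryTheory.Limits AlgebraicGeometry

noncomputable section
namespace Paper
universe u
variable (k : CommRingCat.{u})
variable {G X U : Scheme.{u}}

/-- The morphism `(m, pr₂) : G ×ₖ X ⟶ X ×ₖ X`. -/
def actionPair (sG : G ⟶ Spec k) (sX : X ⟶ Spec k) (m : pullback sG sX ⟶ X)
    (hm : m ≫ sX = pullback.snd sG sX ≫ sX) : pullback sG sX ⟶ pullback sX sX :=
  pullback.lift m (pullback.snd sG sX) hm

/-- The fixed-point scheme `Fix_G(X)`. -/
def Fix (sG : G ⟶ Spec k) (sX : X ⟶ Spec k) (m : pullback sG sX ⟶ X)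
    (hm : m ≫ sX = pullback.snd sG sX ≫ sX) : Scheme :=
  pullback (actionPair k sG sX m hm) (pullback.diagonal sX)

/-- The canonical projection `Fix_G(X) ⟶ G ×ₖ X`. -/
def fixToProd (sG : G ⟶ Spec k) (sX : X ⟶ Spec k) (m : pullback sG sX ⟶ X)
    (hm : m ≫ sX = pullback.snd sG sX ≫ sX) :
    Fix k sG sX m hm ⟶ pullback sG sX :=
  pullback.fst (actionPair k sG sX m hm) (pullback.diagonal sX)

/-- The canonical projection `Fix_G(X) ⟶ X`. -/
def fixToBase (sG : G ⟶ Spec k) (sX : X ⟶ Spec k) (m : pullback sG sX ⟶ X)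
    (hm : m ≫ sX = pullback.snd sG sX ≫ sX) :
    Fix k sG sX m hm ⟶ X :=
  pullback.snd (actionPair k sG sX m hm) (pullback.diagonal sX)

/-- `id_G ×ₖ f : G ×ₖ U ⟶ G ×ₖ X`. -/
def prodMap (sG : G ⟶ Spec k) (sU : U ⟶ Spec k) (sX : X ⟶ Spec k)
    (f : U ⟶ X) (hf : f ≫ sX = sU) : pullback sG sU ⟶ pullback sG sX :=
  pullback.map sG sU sG sX (𝟙 G) f (𝟙 (Spec k)) (by simp) (by simp [hf])

theorem fixMap_w (sG : G ⟶ Spec k) (sU : U ⟶ Spec k) (sX : X ⟶ Spec k)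
    (mU : pullback sG sU ⟶ U) (hmU : mU ≫ sU = pullback.snd sG sU ≫ sU)
    (mX : pullback sG sX ⟶ X) (hmX : mX ≫ sX = pullback.snd sG sX ≫ sX)
    (f : U ⟶ X) (hf : f ≫ sX = sU)
    (heq : prodMap k sG sU sX f hf ≫ mX = mU ≫ f) :
    (fixToProd k sG sU mU hmU ≫ prodMap k sG sU sX f hf) ≫ actionPair k sG sX mX hmX
      = (fixToBase k sG sU mU hmU ≫ f) ≫ pullback.diagonal sX := by
  have h1 : fixToProd k sG sU mU hmU ≫ mU = fixToBase k sG sU mU hmU := by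
    have hc : fixToProd k sG sU mU hmU ≫ actionPair k sG sU mU hmU
        = fixToBase k sG sU mU hmU ≫ pullback.diagonal sU := pullback.condition
    have := congrArg (· ≫ pullback.fst sU sU) hc
    simpa only [actionPair, Category.assoc, pullback.lift_fst, pullback.diagonal_fst,
      Category.comp_id] using this
  have h2 : fixToProd k sG sU mU hmU ≫ pullback.snd sG sU = fixToBase k sG sU mU hmU := by
    have hc : fixToProd k sG sU mU hmU ≫ actionPair k sG sU mU hmU
        = fixToBase k sG sU mU hmU ≫ pullback.diagonal sU := pullback.condition
    have := congrArg (· ≫ pullback.snd sU sU) hc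
    simpa only [actionPair, Category.assoc, pullback.lift_snd, pullback.diagonal_snd,
      Category.comp_id] using this
  apply pullback.hom_ext
  · simp only [Category.assoc, actionPair, pullback.lift_fst, pullback.diagonal_fst,
      Category.comp_id]
    rw [heq, ← Category.assoc, h1]
  · simp only [Category.assoc, actionPair, pullback.lift_snd, pullback.diagonal_snd,
      Category.comp_id]
    rw [show prodMap k sG sU sX f hf ≫ pullback.snd sG sX = pullback.snd sG sU ≫ f from by
      simp only [prodMap, pullback.lift_snd]]
    rw [← Category.assoc, h2]

/-- The induced morphism `Fix_G(f) : Fix_G(U) ⟶ Fix_G(X)`. -/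
def fixMap (sG : G ⟶ Spec k) (sU : U ⟶ Spec k) (sX : X ⟶ Spec k)
    (mU : pullback sG sU ⟶ U) (hmU : mU ≫ sU = pullback.snd sG sU ≫ sU)
    (mX : pullback sG sX ⟶ X) (hmX : mX ≫ sX = pullback.snd sG sX ≫ sX)
    (f : U ⟶ X) (hf : f ≫ sX = sU)
    (heq : prodMap k sG sU sX f hf ≫ mX = mU ≫ f) :
    Fix k sG sU mU hmU ⟶ Fix k sG sX mX hmX :=
  pullback.lift (fixToProd k sG sU mU hmU ≫ prodMap k sG sU sX f hf)
    (fixToBase k sG sU mU hmU ≫ f)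
    (fixMap_w k sG sU sX mU hmU mX hmX f hf heq)

section FixedPoints

variable (sG : G ⟶ Spec k) (sX : X ⟶ Spec k) (m : pullback sG sX ⟶ X)
  (hm : m ≫ sX = pullback.snd sG sX ≫ sX)

lemma fixToProd_actionPair :
    fixToProd k sG sX m hm ≫ actionPair k sG sX m hm
      = fixToBase k sG sX m hm ≫ pullback.diagonal sX :=
  pullback.condition

lemma fixToProd_m : fixToProd k sG sX m hm ≫ m = fixToBase k sG sX m hm := by
  simpa only [actionPair, Category.assoc, pullback.lift_fst, pullback.diagonal_fst,
    Category.comp_id] using fixToProd_actionPair k sG sX m hm =≫ pullback.fst sX sX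

lemma fixToProd_snd :
    fixToProd k sG sX m hm ≫ pullback.snd sG sX = fixToBase k sG sX m hm := by
  simpa only [actionPair, Category.assoc, pullback.lift_snd, pullback.diagonal_snd,
    Category.comp_id] using fixToProd_actionPair k sG sX m hm =≫ pullback.snd sX sX

instance mono_fixToProd : Mono (fixToProd k sG sX m hm) := by
  refine ⟨fun a b h => pullback.hom_ext h ?_⟩
  change a ≫ fixToBase k sG sX m hm = b ≫ fixToBase k sG sX m hm
  rw [← fixToProd_snd, reassoc_of% h]

def fixLift {T : Scheme.{u}} (p : T ⟶ pullback sG sX)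
    (hp : p ≫ m = p ≫ pullback.snd sG sX) : T ⟶ Fix k sG sX m hm :=
  pullback.lift p (p ≫ pullback.snd sG sX) (by
    apply pullback.hom_ext <;> simp only [actionPair, Category.assoc, pullback.lift_fst,
      pullback.lift_snd, pullback.diagonal_fst, pullback.diagonal_snd, Category.comp_id, hp])

lemma fixLift_fixToProd {T : Scheme.{u}} (p : T ⟶ pullback sG sX)
    (hp : p ≫ m = p ≫ pullback.snd sG sX) :
    fixLift k sG sX m hm p hp ≫ fixToProd k sG sX m hm = p :=
  pullback.lift_fst _ _ _

lemma fixLift_fixToBase {T : Scheme.{u}} (p : T ⟶ pullback sG sX)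
    (hp : p ≫ m = p ≫ pullback.snd sG sX) :
    fixLift k sG sX m hm p hp ≫ fixToBase k sG sX m hm = p ≫ pullback.snd sG sX :=
  pullback.lift_snd _ _ _

end FixedPoints

section Functoriality

variable (sG : G ⟶ Spec k) (sU : U ⟶ Spec k) (sX : X ⟶ Spec k) (f : U ⟶ X) (hf : f ≫ sX = sU)

lemma prodMap_fst : prodMap k sG sU sX f hf ≫ pullback.fst sG sX = pullback.fst sG sU := by
  simp only [prodMap, pullback.lift_fst, Category.comp_id]

lemma prodMap_snd :
    prodMap k sG sU sX f hf ≫ pullback.snd sG sX = pullback.snd sG sU ≫ f := by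
  simp only [prodMap, pullback.lift_snd]

lemma mono_prodMap [Mono f] : Mono (prodMap k sG sU sX f hf) :=
  ⟨fun a b h => pullback.hom_ext
    (by simpa only [Category.assoc, prodMap_fst] using h =≫ pullback.fst sG sX)
    ((cancel_mono f).1 (by
      simpa only [Category.assoc, prodMap_snd] using h =≫ pullback.snd sG sX))⟩

variable (mU : pullback sG sU ⟶ U) (hmU : mU ≫ sU = pullback.snd sG sU ≫ sU)
  (mX : pullback sG sX ⟶ X) (hmX : mX ≫ sX = pullback.snd sG sX ≫ sX)
  (heq : prodMap k sG sU sX f hf ≫ mX = mU ≫ f)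

lemma fixMap_fixToProd :
    fixMap k sG sU sX mU hmU mX hmX f hf heq ≫ fixToProd k sG sX mX hmX
      = fixToProd k sG sU mU hmU ≫ prodMap k sG sU sX f hf :=
  pullback.lift_fst _ _ _

lemma fixMap_fixToBase :
    fixMap k sG sU sX mU hmU mX hmX f hf heq ≫ fixToBase k sG sX mX hmX
      = fixToBase k sG sU mU hmU ≫ f :=
  pullback.lift_snd _ _ _

lemma mono_fixMap [Mono f] : Mono (fixMap k sG sU sX mU hmU mX hmX f hf heq) := by
  have := mono_prodMap k sG sU sX f hf
  have : Mono (fixMap k sG sU sX mU hmU mX hmX f hf heq ≫ fixToProd k sG sX mX hmX) := by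
    rw [fixMap_fixToProd]
    infer_instance
  exact mono_of_mono _ (fixToProd k sG sX mX hmX)

/-- If `x = f u` is fixed by `g`, then so is `u`, because `f (g • u) = g • f u = f u` and `f` is
mono. -/
lemma exists_fixMap_lift [Mono f] {T : Scheme.{u}} (a : T ⟶ U) (b : T ⟶ Fix k sG sX mX hmX)
    (hab : a ≫ f = b ≫ fixToBase k sG sX mX hmX) :
    ∃ l : T ⟶ Fix k sG sU mU hmU,
      l ≫ fixToBase k sG sU mU hmU = a ∧ l ≫ fixMap k sG sU sX mU hmU mX hmX f hf heq = b := by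
  let p : T ⟶ pullback sG sU := pullback.lift (b ≫ fixToProd k sG sX mX hmX ≫ pullback.fst sG sX)
    a (by rw [Category.assoc, Category.assoc, pullback.condition, reassoc_of% fixToProd_snd,
      ← reassoc_of% hab, hf])
  have hp_prodMap : p ≫ prodMap k sG sU sX f hf = b ≫ fixToProd k sG sX mX hmX := by
    apply pullback.hom_ext
    · simp only [p, Category.assoc, prodMap_fst, pullback.lift_fst]
    · simp only [p, Category.assoc, prodMap_snd, pullback.lift_snd_assoc, hab, fixToProd_snd]
  have hp_m : p ≫ mU = a := by
    rw [← cancel_mono f, Category.assoc, ← heq, reassoc_of% hp_prodMap, fixToProd_m, hab]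
  refine ⟨fixLift k sG sU mU hmU p (by rw [hp_m, pullback.lift_snd]), ?_, ?_⟩
  · rw [fixLift_fixToBase]
    exact pullback.lift_snd _ _ _
  · rw [← cancel_mono (fixToProd k sG sX mX hmX), Category.assoc, fixMap_fixToProd,
      ← Category.assoc, fixLift_fixToProd, hp_prodMap]

lemma isPullback_fixToBase_fixMap [Mono f] :
    IsPullback (fixToBase k sG sU mU hmU) (fixMap k sG sU sX mU hmU mX hmX f hf heq) f
      (fixToBase k sG sX mX hmX) := by
  have := mono_fixMap k sG sU sX f hf mU hmU mX hmX heq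
  have lift (s : PullbackCone f (fixToBase k sG sX mX hmX)) :=
    exists_fixMap_lift k sG sU sX f hf mU hmU mX hmX heq s.fst s.snd s.condition
  refine IsPullback.of_isLimit (PullbackCone.IsLimit.mk
    (fixMap_fixToBase k sG sU sX f hf mU hmU mX hmX heq).symm
    (fun s => (lift s).choose) (fun s => (lift s).choose_spec.1)
    (fun s => (lift s).choose_spec.2) fun s l _ hl => ?_)
  rw [← cancel_mono (fixMap k sG sU sX mU hmU mX hmX f hf heq), hl, (lift s).choose_spec.2]

end Functoriality

/-- `Fix_G(-)` preserves Zariski covers: if `(f i : U i ⟶ X)` is a jointly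
surjective family of `G`-equivariant open immersions, then the induced morphisms
`Fix_G(f i) : Fix_G(U i) ⟶ Fix_G(X)` are open immersions and are jointly surjective. -/
theorem statement3 {ι : Type u} (sG : G ⟶ Spec k) (sX : X ⟶ Spec k)
    (mX : pullback sG sX ⟶ X) (hmX : mX ≫ sX = pullback.snd sG sX ≫ sX)
    (Uf : ι → Scheme.{u}) (sU : ∀ i, Uf i ⟶ Spec k)
    (mU : ∀ i, pullback sG (sU i) ⟶ Uf i)
    (hmU : ∀ i, mU i ≫ sU i = pullback.snd sG (sU i) ≫ sU i)
    (f : ∀ i, Uf i ⟶ X) (hf : ∀ i, f i ≫ sX = sU i)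
    (heq : ∀ i, prodMap k sG (sU i) sX (f i) (hf i) ≫ mX = mU i ≫ f i)
    (hopen : ∀ i, IsOpenImmersion (f i))
    (hsurj : ∀ x : X, ∃ i, ∃ u : Uf i, (f i).base u = x) :
    (∀ i, IsOpenImmersion
        (fixMap k sG (sU i) sX (mU i) (hmU i) mX hmX (f i) (hf i) (heq i))) ∧
    (∀ z : Fix k sG sX mX hmX, ∃ i, ∃ w : Fix k sG (sU i) (mU i) (hmU i),
        (fixMap k sG (sU i) sX (mU i) (hmU i) mX hmX (f i) (hf i) (heq i)).base w = z) := by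
  have square (i : ι) :=
    isPullback_fixToBase_fixMap k sG (sU i) sX (f i) (hf i) (mU i) (hmU i) mX hmX (heq i)
  refine ⟨fun i => MorphismProperty.of_isPullback (square i) (hopen i), fun z => ?_⟩
  obtain ⟨i, u, hu⟩ := hsurj ((fixToBase k sG sX mX hmX).base z)
  obtain ⟨w, -, hw⟩ := Scheme.exists_preimage_of_isPullback (square i) u z hu
  exact ⟨i, w, hw⟩

end Paper
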